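/- Suppose |Ψ₁⟩ and |Ψ₂⟩ are linearly independent purifications of ρ_A = Σ_j λ_j|j⟩⟨j| (λ_j > 0) written as |Ψ_i⟩ = Σ_j √λ_j |j⟩|μ_j^{(i)}⟩ with orthonormal {μ_j^{(i)}}, sharing the same B-marginal ρ_B. Then there exist complex numbers u₁,v₁,u₂,v₂ with |u_i|²+|v_i|²=1 and u₁·conj(v₁)·conj(u₂)·v₂ ∉ ℝ such that the normalized vectors Φ_i ∝ u_i p₁|Ψ₁⟩ + v_i p₂|Ψ₂⟩ (p₁,p₂ > 0) cannot all simultaneously have A-marginal ρ_A and B-marginal ρ_B. -/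

import Mathlib

open Matrix Complex
open scoped ComplexOrder Classical

noncomputable def matSqrt {n : Type*} [Fintype n] [DecidableEq n]
    (A : Matrix n n ℂ) : Matrix n n ℂ :=
  if h : A.PosSemidef then
    (h.1.eigenvectorUnitary : Matrix n n ℂ) * diagonal ((↑) ∘ (√·) ∘ h.1.eigenvalues) *
      (star h.1.eigenvectorUnitary : Matrix n n ℂ)
  else 0

noncomputable def traceNorm {m n : Type*} [Fintype m] [Fintype n] [DecidableEq n]
    (A : Matrix m n ℂ) : ℝ :=
  ((matSqrt (Aᴴ * A)).trace).re

noncomputable def frobNorm {m n : Type*} [Fintype m] [Fintype n]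
    (A : Matrix m n ℂ) : ℝ :=
  Real.sqrt (((Aᴴ * A).trace).re)

noncomputable def fidelity {n : Type*} [Fintype n] [DecidableEq n]
    (P Q : Matrix n n ℂ) : ℝ :=
  ((matSqrt (matSqrt P * Q * matSqrt P)).trace).re

/-- The outer product |ψ⟩⟨ψ| of a vector. -/
noncomputable def outerMat {ι : Type*} (ψ : ι → ℂ) : Matrix ι ι ℂ :=
  fun p q => ψ p * (starRingEnd ℂ) (ψ q)

/-- Partial trace over the first (A) factor. -/
noncomputable def ptraceA {r s : ℕ} (ρ : Matrix (Fin r × Fin s) (Fin r × Fin s) ℂ) :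
    Matrix (Fin s) (Fin s) ℂ :=
  fun k l => ∑ i : Fin r, ρ (i, k) (i, l)

/-- Partial trace over the second (B) factor. -/
noncomputable def ptraceB {r s : ℕ} (ρ : Matrix (Fin r × Fin s) (Fin r × Fin s) ℂ) :
    Matrix (Fin r) (Fin r) ℂ :=
  fun i j => ∑ k : Fin s, ρ (i, k) (j, k)

/-!
Take `u₁ = v₁ = u₂ = 1/√2` and `v₂ = i/√2`. View `Ψᵢ` as `n × s` matrices `Aᵢ`, so that the
A-marginal is `Aᵢ Aᵢᴴ` and the B-marginal is `(Aᵢᴴ Aᵢ)ᵀ`. If both `Φᵢ ∝ aᵢA₁ + bᵢA₂` have A-marginal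
`ρ_A = A₁A₁ᴴ = A₂A₂ᴴ`, expanding `Φᵢ Φᵢᴴ` gives `aᵢb̄ᵢ X + āᵢbᵢ Xᴴ ∈ ℂ ρ_A` for the cross term
`X = A₁A₂ᴴ`, and since `a₁b̄₁ā₂b₂ = u₁v̄₁ū₂v₂ p₁²p₂² ∉ ℝ` these two relations force `X = z ρ_A`.
Equal B-marginals give `X Xᴴ = A₁ (A₂ᴴA₂) A₁ᴴ = ρ_A²`, so `|z| = 1`, and then
`(A₂ - z̄A₁)(A₂ - z̄A₁)ᴴ = (1 - |z|²) ρ_A` vanishes: `Ψ₂ = z̄ Ψ₁`.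
-/

section Gram

variable {m k : Type*} [Fintype k]

lemma mul_conjTranspose_smul_add_smul (a b : ℂ) (A B : Matrix m k ℂ) :
    (a • A + b • B) * (a • A + b • B)ᴴ = (a * star a) • (A * Aᴴ) + (a * star b) • (A * Bᴴ)
      + (b * star a) • (A * Bᴴ)ᴴ + (b * star b) • (B * Bᴴ) := by
  simp only [conjTranspose_add, conjTranspose_smul, conjTranspose_mul, conjTranspose_conjTranspose,
    Matrix.add_mul, Matrix.mul_add, Matrix.smul_mul, Matrix.mul_smul]
  module

lemma exists_mul_conjTranspose_eq_smul_of_combinations {A B : Matrix m k ℂ}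
    {a₁ b₁ a₂ b₂ c₁ c₂ : ℂ} (hab : (a₁ * star b₁ * star a₂ * b₂).im ≠ 0)
    (hl : A * Aᴴ = B * Bᴴ)
    (h₁ : (a₁ • A + b₁ • B) * (a₁ • A + b₁ • B)ᴴ = c₁ • (A * Aᴴ))
    (h₂ : (a₂ • A + b₂ • B) * (a₂ • A + b₂ • B)ᴴ = c₂ • (A * Aᴴ)) :
    ∃ z : ℂ, A * Bᴴ = z • (A * Aᴴ) := by
  -- Eliminating `(A * Bᴴ)ᴴ` between `h₁` and `h₂` leaves `A * Bᴴ` with coefficient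
  -- `w - w̄ = 2 i Im w`, where `w = a₁ b̄₁ ā₂ b₂`.
  have hdet : a₁ * star b₁ * star a₂ * b₂ - star (a₁ * star b₁ * star a₂ * b₂) ≠ 0 :=
    (Complex.sub_conj _).trans_ne
      (mul_ne_zero (by exact_mod_cast mul_ne_zero two_ne_zero hab) I_ne_zero)
  rw [mul_conjTranspose_smul_add_smul, ← hl] at h₁ h₂
  refine ⟨(star a₂ * b₂ * (c₁ - a₁ * star a₁ - b₁ * star b₁)
      - star a₁ * b₁ * (c₂ - a₂ * star a₂ - b₂ * star b₂)) /
        (a₁ * star b₁ * star a₂ * b₂ - star (a₁ * star b₁ * star a₂ * b₂)), ?_⟩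
  rw [div_eq_inv_mul, mul_smul, eq_inv_smul_iff₀ hdet]
  simp only [star_mul', star_star]
  linear_combination (norm := module) (star a₂ * b₂) • h₁ - (star a₁ * b₁) • h₂

lemma of_mul_conjTranspose_eq_one [DecidableEq m] {μ : m → k → ℂ}
    (hμ : ∀ j j', ∑ l, (starRingEnd ℂ) (μ j l) * μ j' l = if j = j' then 1 else 0) :
    of μ * (of μ)ᴴ = 1 := by
  ext j j'
  simpa [mul_apply, one_apply, mul_comm, eq_comm] using hμ j' j

variable [Fintype m]

lemma eq_star_smul_of_mul_conjTranspose_eq_smul {A B : Matrix m k ℂ} {z : ℂ}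
    (hA : A ≠ 0) (hl : A * Aᴴ = B * Bᴴ) (hr : Aᴴ * A = Bᴴ * B)
    (hz : A * Bᴴ = z • (A * Aᴴ)) : B = star z • A := by
  have hD : (A * Aᴴ)ᴴ = A * Aᴴ := (isHermitian_mul_conjTranspose_self A).eq
  have hz' : B * Aᴴ = star z • (A * Aᴴ) := by
    rw [← conjTranspose_conjTranspose B, ← conjTranspose_mul, hz, conjTranspose_smul, hD]
  have hzz : z * star z = 1 := by
    have hDD := mt self_mul_conjTranspose_eq_zero.mp (mt self_mul_conjTranspose_eq_zero.mp hA)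
    rw [hD] at hDD
    refine smul_left_injective ℂ hDD ?_
    calc (z * star z) • ((A * Aᴴ) * (A * Aᴴ)) = (A * Bᴴ) * (A * Bᴴ)ᴴ := by
          rw [hz, conjTranspose_smul, hD, Matrix.smul_mul, Matrix.mul_smul, smul_smul]
      _ = A * (Bᴴ * B) * Aᴴ := by
          simp only [conjTranspose_mul, conjTranspose_conjTranspose, Matrix.mul_assoc]
      _ = (1 : ℂ) • ((A * Aᴴ) * (A * Aᴴ)) := by
          rw [← hr, one_smul]
          simp only [Matrix.mul_assoc]
  rw [← sub_eq_zero, ← self_mul_conjTranspose_eq_zero]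
  simp only [conjTranspose_sub, conjTranspose_smul, star_star, Matrix.sub_mul, Matrix.mul_sub,
    Matrix.smul_mul, Matrix.mul_smul, hz, hz']
  linear_combination (norm := module) -hl - hzz • (A * Aᴴ : Matrix m m ℂ)

theorem exists_eq_smul_of_combinations {A B : Matrix m k ℂ}
    {a₁ b₁ a₂ b₂ c₁ c₂ : ℂ} (hab : (a₁ * star b₁ * star a₂ * b₂).im ≠ 0)
    (hl : A * Aᴴ = B * Bᴴ) (hr : Aᴴ * A = Bᴴ * B)
    (h₁ : c₁⁻¹ • ((a₁ • A + b₁ • B) * (a₁ • A + b₁ • B)ᴴ) = A * Aᴴ)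
    (h₂ : c₂⁻¹ • ((a₂ • A + b₂ • B) * (a₂ • A + b₂ • B)ᴴ) = A * Aᴴ) :
    ∃ w : ℂ, B = w • A := by
  by_cases hA : A = 0
  · refine ⟨0, ?_⟩
    rw [zero_smul, ← self_mul_conjTranspose_eq_zero, ← hl, hA, Matrix.zero_mul]
  have hD : A * Aᴴ ≠ 0 := mt self_mul_conjTranspose_eq_zero.mp hA
  have unscale {c : ℂ} {G : Matrix m m ℂ} (h : c⁻¹ • G = A * Aᴴ) : G = c • (A * Aᴴ) := by
    have hc : c ≠ 0 := by
      rintro rfl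
      rw [_root_.inv_zero, zero_smul] at h
      exact hD h.symm
    exact (inv_smul_eq_iff₀ hc).mp h
  obtain ⟨z, hz⟩ :=
    exists_mul_conjTranspose_eq_smul_of_combinations hab hl (unscale h₁) (unscale h₂)
  exact ⟨star z, eq_star_smul_of_mul_conjTranspose_eq_smul hA hl hr hz⟩

lemma mul_conjTranspose_of_schmidt [DecidableEq m] {d : m → ℂ} {μ : m → k → ℂ}
    {M : Matrix m k ℂ}
    (hμ : ∀ j j', ∑ l, (starRingEnd ℂ) (μ j l) * μ j' l = if j = j' then 1 else 0)
    (hM : ∀ j l, M j l = d j * μ j l) :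
    M * Mᴴ = diagonal d * (diagonal d)ᴴ := by
  have hM' : M = diagonal d * of μ := by ext; simp [hM]
  rw [hM', conjTranspose_mul, Matrix.mul_assoc, ← Matrix.mul_assoc (of μ),
    of_mul_conjTranspose_eq_one hμ, Matrix.one_mul]

end Gram

section Marginals

variable {r s : ℕ}

lemma ptraceB_smul (c : ℂ) (ρ : Matrix (Fin r × Fin s) (Fin r × Fin s) ℂ) :
    ptraceB (c • ρ) = c • ptraceB ρ := by
  ext; simp [ptraceB, Finset.mul_sum]

lemma ptraceB_outerMat (ψ : Fin r × Fin s → ℂ) :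
    ptraceB (outerMat ψ) = of (Function.curry ψ) * (of (Function.curry ψ))ᴴ := by
  ext; simp [ptraceB, outerMat, mul_apply]

lemma ptraceA_outerMat (ψ : Fin r × Fin s → ℂ) :
    ptraceA (outerMat ψ) = ((of (Function.curry ψ))ᴴ * of (Function.curry ψ))ᵀ := by
  ext; simp [ptraceA, outerMat, mul_apply, mul_comm]

theorem exists_eq_smul_of_marginals {ψ₁ ψ₂ : Fin r × Fin s → ℂ}
    {a₁ b₁ a₂ b₂ c₁ c₂ : ℂ} (hab : (a₁ * star b₁ * star a₂ * b₂).im ≠ 0)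
    (hA : ptraceB (outerMat ψ₁) = ptraceB (outerMat ψ₂))
    (hB : ptraceA (outerMat ψ₁) = ptraceA (outerMat ψ₂))
    (h₁ : ptraceB (c₁⁻¹ • outerMat fun p => a₁ * ψ₁ p + b₁ * ψ₂ p) = ptraceB (outerMat ψ₁))
    (h₂ : ptraceB (c₂⁻¹ • outerMat fun p => a₂ * ψ₁ p + b₂ * ψ₂ p) = ptraceB (outerMat ψ₁)) :
    ∃ w : ℂ, ψ₂ = w • ψ₁ := by
  have hcomb (a b : ℂ) : of (Function.curry fun p => a * ψ₁ p + b * ψ₂ p)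
      = a • of (Function.curry ψ₁) + b • of (Function.curry ψ₂) := by ext; simp
  rw [ptraceB_smul, ptraceB_outerMat, ptraceB_outerMat, hcomb] at h₁ h₂
  rw [ptraceB_outerMat, ptraceB_outerMat] at hA
  rw [ptraceA_outerMat, ptraceA_outerMat, transpose_inj] at hB
  obtain ⟨w, hw⟩ := exists_eq_smul_of_combinations hab hA hB h₁ h₂
  exact ⟨w, funext fun p => by simpa using congrFun₂ hw p.1 p.2⟩

end Marginals

theorem stmt18_general {n s : ℕ}
    (lam : Fin n → ℝ)
    (μ ν : Fin n → Fin s → ℂ)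
    (hμ : ∀ j k, ∑ l, (starRingEnd ℂ) (μ j l) * μ k l = if j = k then 1 else 0)
    (hν : ∀ j k, ∑ l, (starRingEnd ℂ) (ν j l) * ν k l = if j = k then 1 else 0)
    (ψ₁ ψ₂ : Fin n × Fin s → ℂ)
    (hψ₁ : ∀ j k, ψ₁ (j, k) = (Real.sqrt (lam j) : ℂ) * μ j k)
    (hψ₂ : ∀ j k, ψ₂ (j, k) = (Real.sqrt (lam j) : ℂ) * ν j k)
    (hsameB : ptraceA (outerMat ψ₁) = ptraceA (outerMat ψ₂))
    (hindep : ¬ ∃ c : ℂ, ψ₂ = c • ψ₁)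
    (p₁ p₂ : ℝ) (hp₁ : 0 < p₁) (hp₂ : 0 < p₂) :
    ∃ u₁ v₁ u₂ v₂ : ℂ,
      ‖u₁‖ ^ 2 + ‖v₁‖ ^ 2 = 1 ∧
      ‖u₂‖ ^ 2 + ‖v₂‖ ^ 2 = 1 ∧
      (u₁ * (starRingEnd ℂ) v₁ * (starRingEnd ℂ) u₂ * v₂).im ≠ 0 ∧
      ¬ (let ρA := ptraceB (outerMat ψ₁)
         let ρB := ptraceA (outerMat ψ₁)
         let Φ₁ : Fin n × Fin s → ℂ := fun p => u₁ * (p₁ : ℂ) * ψ₁ p + v₁ * (p₂ : ℂ) * ψ₂ p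
         let Φ₂ : Fin n × Fin s → ℂ := fun p => u₂ * (p₁ : ℂ) * ψ₁ p + v₂ * (p₂ : ℂ) * ψ₂ p
         let c₁ : ℂ := ((∑ p, ‖Φ₁ p‖ ^ 2 : ℝ) : ℂ)
         let c₂ : ℂ := ((∑ p, ‖Φ₂ p‖ ^ 2 : ℝ) : ℂ)
         ptraceB (c₁⁻¹ • outerMat Φ₁) = ρA ∧ ptraceA (c₁⁻¹ • outerMat Φ₁) = ρB ∧
         ptraceB (c₂⁻¹ • outerMat Φ₂) = ρA ∧ ptraceA (c₂⁻¹ • outerMat Φ₂) = ρB) := by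
  have hA : ptraceB (outerMat ψ₁) = ptraceB (outerMat ψ₂) := by
    rw [ptraceB_outerMat, ptraceB_outerMat,
      mul_conjTranspose_of_schmidt (M := of (Function.curry ψ₁)) hμ hψ₁,
      mul_conjTranspose_of_schmidt (M := of (Function.curry ψ₂)) hν hψ₂]
  set r : ℂ := (((√2)⁻¹ : ℝ) : ℂ)
  refine ⟨r, r, r, I * r, by norm_num [r], by norm_num [r], by simp [r], ?_⟩
  rintro ⟨h₁, -, h₂, -⟩
  refine hindep (exists_eq_smul_of_marginals ?_ hA hsameB h₁ h₂)
  simp [r, hp₁.ne', hp₂.ne']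

/-- Remark after Theorem 2: if `Ψ₁, Ψ₂` are linearly independent purifications
`Ψ_i = Σ_j √λ_j |j⟩|μ_j^{(i)}⟩` of `ρ_A` (with `λ_j > 0`) sharing the same B-marginal
`ρ_B`, then there are coefficient pairs `(u₁,v₁), (u₂,v₂)` with `|u_i|²+|v_i|²=1` and
`u₁ v̄₁ ū₂ v₂ ∉ ℝ` such that the normalized combinations `Φ_i ∝ u_i p₁ Ψ₁ + v_i p₂ Ψ₂`
cannot all simultaneously have A-marginal `ρ_A` and B-marginal `ρ_B`. -/
theorem stmt18 {n s : ℕ}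
    (lam : Fin n → ℝ) (hlam : ∀ j, 0 < lam j)
    (μ ν : Fin n → Fin s → ℂ)
    (hμ : ∀ j k, ∑ l, (starRingEnd ℂ) (μ j l) * μ k l = if j = k then 1 else 0)
    (hν : ∀ j k, ∑ l, (starRingEnd ℂ) (ν j l) * ν k l = if j = k then 1 else 0)
    (ψ₁ ψ₂ : Fin n × Fin s → ℂ)
    (hψ₁ : ∀ j k, ψ₁ (j, k) = (Real.sqrt (lam j) : ℂ) * μ j k)
    (hψ₂ : ∀ j k, ψ₂ (j, k) = (Real.sqrt (lam j) : ℂ) * ν j k)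
    (hsameB : ptraceA (outerMat ψ₁) = ptraceA (outerMat ψ₂))
    (hindep : ¬ ∃ c : ℂ, ψ₂ = c • ψ₁)
    (p₁ p₂ : ℝ) (hp₁ : 0 < p₁) (hp₂ : 0 < p₂) :
    ∃ u₁ v₁ u₂ v₂ : ℂ,
      ‖u₁‖ ^ 2 + ‖v₁‖ ^ 2 = 1 ∧
      ‖u₂‖ ^ 2 + ‖v₂‖ ^ 2 = 1 ∧
      (u₁ * (starRingEnd ℂ) v₁ * (starRingEnd ℂ) u₂ * v₂).im ≠ 0 ∧
      ¬ (let ρA := ptraceB (outerMat ψ₁)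
         let ρB := ptraceA (outerMat ψ₁)
         let Φ₁ : Fin n × Fin s → ℂ := fun p => u₁ * (p₁ : ℂ) * ψ₁ p + v₁ * (p₂ : ℂ) * ψ₂ p
         let Φ₂ : Fin n × Fin s → ℂ := fun p => u₂ * (p₁ : ℂ) * ψ₁ p + v₂ * (p₂ : ℂ) * ψ₂ p
         let c₁ : ℂ := ((∑ p, ‖Φ₁ p‖ ^ 2 : ℝ) : ℂ)
         let c₂ : ℂ := ((∑ p, ‖Φ₂ p‖ ^ 2 : ℝ) : ℂ)
         ptraceB (c₁⁻¹ • outerMat Φ₁) = ρA ∧ ptraceA (c₁⁻¹ • outerMat Φ₁) = ρB ∧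
         ptraceB (c₂⁻¹ • outerMat Φ₂) = ρA ∧ ptraceA (c₂⁻¹ • outerMat Φ₂) = ρB) :=
  stmt18_general lam μ ν hμ hν ψ₁ ψ₂ hψ₁ hψ₂ hsameB hindep p₁ p₂ hp₁ hp₂
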